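/- arXiv:1408.4331 — 4 statements merged into one kernel-verified Lean document; each statement's English description precedes it below -/
import Mathlib

section
/- Let V be a finite-dimensional real inner product space and W a finite-dimensional real vector space. If a bilinear form φ: V × V → W satisfies φ(X,Y) = 0 for every pair of orthonormal vectors X, Y ∈ V, then there exists ξ ∈ W such that φ(X,Y) = ⟨X,Y⟩ξ for all X, Y ∈ V. -/
open scoped RealInnerProductSpace

/-- Lemma 3.1 (alle): a bilinear form vanishing on all orthonormal pairs is umbilical. -/
theorem umbilical_of_vanishing_on_orthonormal_pairs
    (V W : Type*) [NormedAddCommGroup V] [InnerProductSpace ℝ V] [FiniteDimensional ℝ V]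
    [AddCommGroup W] [Module ℝ W] [FiniteDimensional ℝ W]
    (φ : V →ₗ[ℝ] V →ₗ[ℝ] W)
    (h : ∀ X Y : V, ‖X‖ = 1 → ‖Y‖ = 1 → ⟪X, Y⟫ = 0 → φ X Y = 0) :
    ∃ ξ : W, ∀ X Y : V, φ X Y = ⟪X, Y⟫ • ξ := by
  -- Step 1: φ vanishes on all orthogonal pairs
  have h0 : ∀ X Y : V, ⟪X, Y⟫ = 0 → φ X Y = 0 := by
    intro X Y hXY
    rcases eq_or_ne X 0 with hX | hX
    · simp [hX]
    rcases eq_or_ne Y 0 with hY | hY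
    · simp [hY]
    have hXn : ‖X‖ ≠ 0 := norm_ne_zero_iff.mpr hX
    have hYn : ‖Y‖ ≠ 0 := norm_ne_zero_iff.mpr hY
    have h1 : ‖(‖X‖⁻¹ • X)‖ = 1 := by
      rw [norm_smul, Real.norm_eq_abs, abs_inv, abs_norm]
      field_simp
    have h2 : ‖(‖Y‖⁻¹ • Y)‖ = 1 := by
      rw [norm_smul, Real.norm_eq_abs, abs_inv, abs_norm]
      field_simp
    have h3 : ⟪(‖X‖⁻¹ • X), (‖Y‖⁻¹ • Y)⟫ = 0 := by
      rw [real_inner_smul_left, real_inner_smul_right, hXY]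
      ring
    have := h _ _ h1 h2 h3
    simp only [map_smul, LinearMap.smul_apply, smul_eq_zero] at this
    rcases this with hc | this
    · exact absurd hc (inv_ne_zero hYn)
    rcases this with hc | this
    · exact absurd hc (inv_ne_zero hXn)
    exact this
  rcases isEmpty_or_nonempty (Fin (Module.finrank ℝ V)) with he | hne
  · -- dimension 0
    have : Module.finrank ℝ V = 0 := by
      by_contra hn
      exact he.false ⟨0, Nat.pos_of_ne_zero hn⟩
    have hsub : Subsingleton V := by
      rw [Module.finrank_zero_iff] at this
      exact this
    refine ⟨0, fun X Y => ?_⟩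
    have hX0 : X = 0 := Subsingleton.elim X 0
    simp [hX0]
  · set b := stdOrthonormalBasis ℝ V with hb
    have hbo := b.orthonormal
    have hinner : ∀ i j, ⟪b i, b j⟫ = if i = j then 1 else 0 :=
      orthonormal_iff_ite.mp hbo
    -- Step 2: all diagonal values coincide
    have hdiag : ∀ i j, φ (b i) (b i) = φ (b j) (b j) := by
      intro i j
      rcases eq_or_ne i j with rfl | hij
      · rfl
      have hij' : ⟪b i, b j⟫ = 0 := by simp [hinner, hij]
      have hji' : ⟪b j, b i⟫ = 0 := by simp [hinner, hij.symm]
      set u := (Real.sqrt 2)⁻¹ • (b i + b j) with hu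
      set v := (Real.sqrt 2)⁻¹ • (b i - b j) with hv
      have hs2 : Real.sqrt 2 ≠ 0 := by positivity
      have hnormadd : ‖b i + b j‖ = Real.sqrt 2 := by
        have : ‖b i + b j‖ ^ 2 = 2 := by
          rw [norm_add_sq_real, hij']
          simp [hbo.1 i, hbo.1 j]
          ring
        have h2 : (Real.sqrt 2) ^ 2 = 2 := Real.sq_sqrt (by norm_num)
        nlinarith [norm_nonneg (b i + b j), Real.sqrt_nonneg 2]
      have hnormsub : ‖b i - b j‖ = Real.sqrt 2 := by
        have : ‖b i - b j‖ ^ 2 = 2 := by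
          rw [norm_sub_sq_real, hij']
          simp [hbo.1 i, hbo.1 j]
          ring
        have h2 : (Real.sqrt 2) ^ 2 = 2 := Real.sq_sqrt (by norm_num)
        nlinarith [norm_nonneg (b i - b j), Real.sqrt_nonneg 2]
      have hun : ‖u‖ = 1 := by
        rw [hu, norm_smul, Real.norm_eq_abs, abs_inv, abs_of_nonneg (Real.sqrt_nonneg 2),
          hnormadd]
        field_simp
      have hvn : ‖v‖ = 1 := by
        rw [hv, norm_smul, Real.norm_eq_abs, abs_inv, abs_of_nonneg (Real.sqrt_nonneg 2),
          hnormsub]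
        field_simp
      have huv : ⟪u, v⟫ = 0 := by
        rw [hu, hv, real_inner_smul_left, real_inner_smul_right, inner_add_left,
          inner_sub_right, inner_sub_right, hij', hji']
        have hii : ⟪b i, b i⟫ = (1 : ℝ) := by simp [hinner]
        have hjj : ⟪b j, b j⟫ = (1 : ℝ) := by simp [hinner]
        rw [hii, hjj]
        ring
      have hz := h u v hun hvn huv
      rw [hu, hv] at hz
      simp only [map_smul, map_add, map_sub, LinearMap.smul_apply, LinearMap.sub_apply,
        LinearMap.add_apply] at hz
      rw [h0 _ _ hij', h0 _ _ hji'] at hz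
      have hsne : ((Real.sqrt 2)⁻¹ : ℝ) ≠ 0 := inv_ne_zero hs2
      have hz' : ((Real.sqrt 2)⁻¹ : ℝ) • (φ (b i) (b i) - φ (b j) (b j)) = 0 := by
        rw [smul_sub]
        simpa using hz
      rcases smul_eq_zero.mp hz' with hc | hzz
      · exact absurd hc hsne
      exact sub_eq_zero.mp hzz
    -- Step 3: conclude
    refine ⟨φ (b (Classical.arbitrary _)) (b (Classical.arbitrary _)), fun X Y => ?_⟩
    set ξ := φ (b (Classical.arbitrary _)) (b (Classical.arbitrary _)) with hξ
    have key : ∀ i j, φ (b i) (b j) = ⟪b i, b j⟫ • ξ := by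
      intro i j
      rcases eq_or_ne i j with rfl | hij
      · rw [hdiag i (Classical.arbitrary _)]
        have hii : ⟪b i, b i⟫ = (1 : ℝ) := by simp [hinner]
        rw [hii, one_smul]
      · have : ⟪b i, b j⟫ = 0 := by simp [hinner, hij]
        rw [this, h0 _ _ this, zero_smul]
    have hX := b.sum_repr X
    have hY := b.sum_repr Y
    calc φ X Y = φ (∑ i, b.repr X i • b i) (∑ j, b.repr Y j • b j) := by rw [hX, hY]
      _ = ∑ i, ∑ j, (b.repr X i * b.repr Y j) • φ (b i) (b j) := by
          simp only [map_sum, map_smul, LinearMap.coe_sum, Finset.sum_apply,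
            LinearMap.smul_apply, Finset.smul_sum, smul_smul]
          rw [Finset.sum_comm]
          exact Finset.sum_congr rfl fun i _ => Finset.sum_congr rfl fun j _ => by
            rw [mul_comm]
      _ = ∑ i, ∑ j, (b.repr X i * b.repr Y j * ⟪b i, b j⟫) • ξ := by
          simp only [key, smul_smul]
      _ = (∑ i, b.repr X i * b.repr Y i) • ξ := by
          rw [Finset.sum_smul]
          refine Finset.sum_congr rfl fun i _ => ?_
          rw [Finset.sum_eq_single i]
          · simp [hinner]
          · intro j _ hji
            simp [hinner, hji.symm]
          · intro hi; exact absurd (Finset.mem_univ i) hi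
      _ = ⟪X, Y⟫ • ξ := by
          congr 1
          rw [← b.sum_inner_mul_inner X Y]
          refine Finset.sum_congr rfl fun i _ => ?_
          rw [b.repr_apply_apply, b.repr_apply_apply, real_inner_comm X]
end

section
/- Let V be a finite-dimensional real inner product space, W a 2-dimensional real inner product space, and α: V × V → W a symmetric bilinear form with third fundamental form III(X,Y) = Σᵢ ⟨α(X,Xᵢ), α(Y,Xᵢ)⟩ for an orthonormal basis X₁,…,Xₙ of V. If III = (1/r²)⟨·,·⟩, then for any orthonormal basis {ξ₁, ξ₂} of W the operators A_{ξ₁}² and A_{ξ₂}² commute, i.e. they are simultaneously diagonalizable. -/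
open scoped RealInnerProductSpace

/-!
Expanding `⟪α(X, Xᵢ), α(Y, Xᵢ)⟫` in an orthonormal basis `ξ₁, ξ₂` of `W` and using the symmetry
of `α` gives `III(X, Y) = ⟪(A_{ξ₁}² + A_{ξ₂}²) X, Y⟫`, so the hypothesis says
`A_{ξ₁}² + A_{ξ₂}² = r⁻² · id`. Hence `A_{ξ₂}² = r⁻² · id - A_{ξ₁}²` commutes with `A_{ξ₁}²`.
-/

theorem commute_of_add_eq_algebraMap {R A : Type*} [CommSemiring R] [Ring A] [Algebra R A]
    {a b : A} {c : R} (h : a + b = algebraMap R A c) : Commute a b := by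
  rw [eq_sub_of_add_eq' h]
  exact (Algebra.commute_algebraMap_right c a).sub_right (Commute.refl a)

section ShapeOperator

variable {V W : Type*} [NormedAddCommGroup V] [InnerProductSpace ℝ V]
  [NormedAddCommGroup W] [InnerProductSpace ℝ W]
  {α : V →ₗ[ℝ] V →ₗ[ℝ] W} {A : W → V →ₗ[ℝ] V}

theorem inner_shape_apply_shape_apply (hsymm : ∀ X Y : V, α X Y = α Y X)
    (hA : ∀ (ξ : W) (X Y : V), ⟪A ξ X, Y⟫ = ⟪α X Y, ξ⟫) (ξ : W) (X Y : V) :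
    ⟪A ξ X, A ξ Y⟫ = ⟪A ξ (A ξ X), Y⟫ := by
  rw [hA ξ (A ξ X), hsymm, ← hA, real_inner_comm]

theorem sum_inner_apply_apply_eq_inner_sum_shape_sq {ι κ : Type*} [Fintype ι] [Fintype κ]
    (hsymm : ∀ X Y : V, α X Y = α Y X) (hA : ∀ (ξ : W) (X Y : V), ⟪A ξ X, Y⟫ = ⟪α X Y, ξ⟫)
    (b : OrthonormalBasis ι ℝ V) (ξ : OrthonormalBasis κ ℝ W) (X Y : V) :
    ∑ i, ⟪α X (b i), α Y (b i)⟫ = ⟪∑ j, A (ξ j) (A (ξ j) X), Y⟫ := by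
  have expand (i : ι) : ⟪α X (b i), α Y (b i)⟫ = ∑ j, ⟪A (ξ j) X, b i⟫ * ⟪b i, A (ξ j) Y⟫ := by
    rw [← ξ.sum_inner_mul_inner]
    refine Finset.sum_congr rfl fun j _ => ?_
    rw [hA, real_inner_comm (A (ξ j) Y), hA, real_inner_comm (α Y (b i))]
  simp_rw [expand, sum_inner]
  rw [Finset.sum_comm]
  refine Finset.sum_congr rfl fun j _ => ?_
  rw [b.sum_inner_mul_inner, inner_shape_apply_shape_apply hsymm hA]

theorem sum_shape_sq_eq_algebraMap {ι κ : Type*} [Fintype ι] [Fintype κ]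
    (hsymm : ∀ X Y : V, α X Y = α Y X) (hA : ∀ (ξ : W) (X Y : V), ⟪A ξ X, Y⟫ = ⟪α X Y, ξ⟫)
    (b : OrthonormalBasis ι ℝ V) (ξ : OrthonormalBasis κ ℝ W) {c : ℝ}
    (hIII : ∀ X Y : V, ∑ i, ⟪α X (b i), α Y (b i)⟫ = c * ⟪X, Y⟫) :
    ∑ j, A (ξ j) * A (ξ j) = algebraMap ℝ (Module.End ℝ V) c := by
  ext X
  refine ext_inner_right ℝ fun Y => ?_
  rw [Module.algebraMap_end_apply, real_inner_smul_left, ← hIII,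
    sum_inner_apply_apply_eq_inner_sum_shape_sq hsymm hA b ξ, LinearMap.sum_apply]
  rfl

end ShapeOperator

theorem shape_operator_squares_commute_general
    (V W : Type*) [NormedAddCommGroup V] [InnerProductSpace ℝ V]
    [NormedAddCommGroup W] [InnerProductSpace ℝ W]
    (hW : Module.finrank ℝ W = 2)
    (n : ℕ) (b : OrthonormalBasis (Fin n) ℝ V)
    (α : V →ₗ[ℝ] V →ₗ[ℝ] W) (hsymm : ∀ X Y : V, α X Y = α Y X)
    (A : W → V →ₗ[ℝ] V)
    (hA : ∀ (ξ : W) (X Y : V), ⟪A ξ X, Y⟫ = ⟪α X Y, ξ⟫)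
    (r : ℝ)
    (hIII : ∀ X Y : V, ∑ i, ⟪α X (b i), α Y (b i)⟫ = (1 / r ^ 2) * ⟪X, Y⟫) :
    ∀ ξ₁ ξ₂ : W, ‖ξ₁‖ = 1 → ‖ξ₂‖ = 1 → ⟪ξ₁, ξ₂⟫ = 0 →
      (A ξ₁ ∘ₗ A ξ₁) ∘ₗ (A ξ₂ ∘ₗ A ξ₂) = (A ξ₂ ∘ₗ A ξ₂) ∘ₗ (A ξ₁ ∘ₗ A ξ₁) := by
  intro ξ₁ ξ₂ h₁ h₂ h₁₂
  have hon : Orthonormal ℝ ![ξ₁, ξ₂] := by simp [h₁, h₂, h₁₂]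
  let ξ : OrthonormalBasis (Fin 2) ℝ W :=
    (basisOfOrthonormalOfCardEqFinrank hon (by simp [hW])).toOrthonormalBasis (by simpa using hon)
  have hsum := sum_shape_sq_eq_algebraMap hsymm hA b ξ hIII
  simp only [Fin.sum_univ_two, ξ, Module.Basis.coe_toOrthonormalBasis,
    coe_basisOfOrthonormalOfCardEqFinrank, Matrix.cons_val_zero, Matrix.cons_val_one] at hsum
  exact (commute_of_add_eq_algebraMap hsum).eq

/-- If the third fundamental form of α is (1/r²)·⟨·,·⟩, then the squares of the shape
operators with respect to any orthonormal basis of W commute. -/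
theorem shape_operator_squares_commute
    (V W : Type*) [NormedAddCommGroup V] [InnerProductSpace ℝ V] [FiniteDimensional ℝ V]
    [NormedAddCommGroup W] [InnerProductSpace ℝ W] [FiniteDimensional ℝ W]
    (hW : Module.finrank ℝ W = 2)
    (n : ℕ) (b : OrthonormalBasis (Fin n) ℝ V)
    (α : V →ₗ[ℝ] V →ₗ[ℝ] W) (hsymm : ∀ X Y : V, α X Y = α Y X)
    (A : W → V →ₗ[ℝ] V)
    (hA : ∀ (ξ : W) (X Y : V), ⟪A ξ X, Y⟫ = ⟪α X Y, ξ⟫)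
    (r : ℝ) (hr : 0 < r)
    (hIII : ∀ X Y : V, ∑ i, ⟪α X (b i), α Y (b i)⟫ = (1 / r ^ 2) * ⟪X, Y⟫) :
    ∀ ξ₁ ξ₂ : W, ‖ξ₁‖ = 1 → ‖ξ₂‖ = 1 → ⟪ξ₁, ξ₂⟫ = 0 →
      (A ξ₁ ∘ₗ A ξ₁) ∘ₗ (A ξ₂ ∘ₗ A ξ₂) = (A ξ₂ ∘ₗ A ξ₂) ∘ₗ (A ξ₁ ∘ₗ A ξ₁) :=
  shape_operator_squares_commute_general V W hW n b α hsymm A hA r hIII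
end

section
/- Let E, W be real inner product spaces with dim W = 2, and α: E × E → W symmetric bilinear with shape operators satisfying A_ξ² = λ(ξ)²·Id_E for all nonzero ξ ∈ W, where λ(ξ) > 0. Fix an orthonormal basis {ξ₁, ξ₂} of W and let E± be the (±λ(ξ₁))-eigenspaces of A_{ξ₁}. Then there exist ρ ∈ ℝ and σ > 0 with ρ² + σ² = λ(ξ₂)², and a linear map A: E⁺ → E⁻ with A*A = σ²·Id_{E⁺} and AA* = σ²·Id_{E⁻}, such that A_{ξ₂} = (ρ·Id + A)π⁺ + (−ρ·Id + A*)π⁻, where π± are the orthogonal projections onto E±. -/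
open scoped RealInnerProductSpace

set_option maxHeartbeats 1000000 in
/-- Lemma 3.3 (aebb), second part: the block structure of A_{ξ₂} with respect to the
eigenspace decomposition E = E⁺ ⊕ E⁻ of A_{ξ₁}. -/
theorem shape_operator_block_structure
    (E W : Type*) [NormedAddCommGroup E] [InnerProductSpace ℝ E] [FiniteDimensional ℝ E]
    [NormedAddCommGroup W] [InnerProductSpace ℝ W] [FiniteDimensional ℝ W]
    (hW : Module.finrank ℝ W = 2)
    (α : E →ₗ[ℝ] E →ₗ[ℝ] W) (hsymm : ∀ X Y : E, α X Y = α Y X)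
    (A : W → E →ₗ[ℝ] E)
    (hA : ∀ (ξ : W) (X Y : E), ⟪A ξ X, Y⟫ = ⟪α X Y, ξ⟫)
    (lam : W → ℝ) (hpos : ∀ ξ : W, ξ ≠ 0 → 0 < lam ξ)
    (hsq : ∀ ξ : W, ξ ≠ 0 → A ξ ∘ₗ A ξ = (lam ξ) ^ 2 • LinearMap.id)
    (ξ₁ ξ₂ : W) (hξ₁ : ‖ξ₁‖ = 1) (hξ₂ : ‖ξ₂‖ = 1) (hξ₁₂ : ⟪ξ₁, ξ₂⟫ = 0) :
    ∃ (ρ σ : ℝ), 0 < σ ∧ ρ ^ 2 + σ ^ 2 = (lam ξ₂) ^ 2 ∧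
      ∃ B : (Module.End.eigenspace (A ξ₁) (lam ξ₁) : Submodule ℝ E) →ₗ[ℝ]
            (Module.End.eigenspace (A ξ₁) (-(lam ξ₁)) : Submodule ℝ E),
        LinearMap.adjoint B ∘ₗ B = σ ^ 2 • LinearMap.id ∧
        B ∘ₗ LinearMap.adjoint B = σ ^ 2 • LinearMap.id ∧
        (∀ x : (Module.End.eigenspace (A ξ₁) (lam ξ₁) : Submodule ℝ E),
          A ξ₂ (x : E) = ρ • (x : E) + ((B x : E))) ∧
        (∀ y : (Module.End.eigenspace (A ξ₁) (-(lam ξ₁)) : Submodule ℝ E),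
          A ξ₂ (y : E) = -ρ • (y : E) + ((LinearMap.adjoint B y : E))) := by
  have hξ₁0 : ξ₁ ≠ 0 := by intro h; rw [h, norm_zero] at hξ₁; norm_num at hξ₁
  have hξ₂0 : ξ₂ ≠ 0 := by intro h; rw [h, norm_zero] at hξ₂; norm_num at hξ₂
  -- trivial case
  rcases subsingleton_or_nontrivial E with hE | hE
  · haveI : Subsingleton (↥(Module.End.eigenspace (A ξ₁) (lam ξ₁))) :=
      ⟨fun a b => Subtype.ext (Subsingleton.elim _ _)⟩
    haveI : Subsingleton (↥(Module.End.eigenspace (A ξ₁) (-(lam ξ₁)))) :=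
      ⟨fun a b => Subtype.ext (Subsingleton.elim _ _)⟩
    exact ⟨0, lam ξ₂, hpos _ hξ₂0, by ring, 0,
      LinearMap.ext fun x => Subsingleton.elim _ _,
      LinearMap.ext fun x => Subsingleton.elim _ _,
      fun x => Subsingleton.elim _ _,
      fun y => Subsingleton.elim _ _⟩
  set l1 := lam ξ₁ with hl1def
  set l2 := lam ξ₂ with hl2def
  have hl1 : 0 < l1 := hpos _ hξ₁0
  have hl2 : 0 < l2 := hpos _ hξ₂0
  have h2l1 : (2 : ℝ) * l1 ≠ 0 := by positivity
  set Ep : Submodule ℝ E := Module.End.eigenspace (A ξ₁) l1 with hEp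
  set Em : Submodule ℝ E := Module.End.eigenspace (A ξ₁) (-l1) with hEm
  have hsq' : ∀ (ξ : W), ξ ≠ 0 → ∀ v : E, A ξ (A ξ v) = lam ξ ^ 2 • v := by
    intro ξ h v
    have := LinearMap.congr_fun (hsq ξ h) v
    simpa using this
  have hsq1 : ∀ v : E, A ξ₁ (A ξ₁ v) = l1 ^ 2 • v := fun v => hsq' ξ₁ hξ₁0 v
  have hsq2 : ∀ v : E, A ξ₂ (A ξ₂ v) = l2 ^ 2 • v := fun v => hsq' ξ₂ hξ₂0 v
  have hsymA : ∀ (ξ : W) (u v : E), ⟪A ξ u, v⟫ = ⟪u, A ξ v⟫ := by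
    intro ξ u v
    rw [hA, hsymm, ← hA]
    exact real_inner_comm _ _
  have hlin : ∀ (a b : ℝ) (v : E), A (a • ξ₁ + b • ξ₂) v = a • A ξ₁ v + b • A ξ₂ v := by
    intro a b v
    apply ext_inner_right ℝ
    intro y
    rw [hA, inner_add_right, real_inner_smul_right, real_inner_smul_right,
      inner_add_left, real_inner_smul_left, real_inner_smul_left, hA, hA]
  -- anticommutator
  set c : ℝ := lam (ξ₁ + ξ₂) ^ 2 - l1 ^ 2 - l2 ^ 2 with hc
  have h12ne : ξ₁ + ξ₂ ≠ 0 := by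
    intro h
    have h0 : ⟪ξ₁, ξ₁ + ξ₂⟫ = 0 := by rw [h, inner_zero_right]
    rw [inner_add_right, hξ₁₂, real_inner_self_eq_norm_sq, hξ₁] at h0
    norm_num at h0
  have hanti : ∀ v : E, A ξ₁ (A ξ₂ v) + A ξ₂ (A ξ₁ v) = c • v := by
    intro v
    have hadd : ∀ w : E, A (ξ₁ + ξ₂) w = A ξ₁ w + A ξ₂ w := by
      intro w; have := hlin 1 1 w; simpa using this
    have h1 := hsq' (ξ₁ + ξ₂) h12ne v
    rw [hadd, hadd, map_add, map_add, hsq1, hsq2] at h1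
    rw [hc, sub_smul, sub_smul, ← h1]
    abel
  set ρ : ℝ := c / (2 * l1) with hρ
  -- the two eigenprojections
  set P : E →ₗ[ℝ] E := (2 * l1)⁻¹ • (l1 • LinearMap.id + A ξ₁) with hP
  set Q : E →ₗ[ℝ] E := (2 * l1)⁻¹ • (l1 • LinearMap.id - A ξ₁) with hQ
  have hPdef : ∀ v : E, P v = (2 * l1)⁻¹ • (l1 • v + A ξ₁ v) := by
    intro v; simp [hP]
  have hQdef : ∀ v : E, Q v = (2 * l1)⁻¹ • (l1 • v - A ξ₁ v) := by
    intro v; simp [hQ]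
  have hPQ : ∀ v : E, P v + Q v = v := by
    intro v
    rw [hPdef, hQdef, ← smul_add,
      show (l1 • v + A ξ₁ v) + (l1 • v - A ξ₁ v) = (2 * l1) • v by module,
      smul_smul, inv_mul_cancel₀ h2l1, one_smul]
  have hPeig : ∀ v : E, A ξ₁ (P v) = l1 • P v := by
    intro v
    rw [hPdef, map_smul, map_add, map_smul, hsq1]
    module
  have hQeig : ∀ v : E, A ξ₁ (Q v) = (-l1) • Q v := by
    intro v
    rw [hQdef, map_smul, map_sub, map_smul, hsq1]
    module
  have hPmem : ∀ v : E, P v ∈ Ep := by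
    intro v; rw [hEp, Module.End.mem_eigenspace_iff]; exact hPeig v
  have hQmem : ∀ v : E, Q v ∈ Em := by
    intro v; rw [hEm, Module.End.mem_eigenspace_iff]; exact hQeig v
  have hmemP : ∀ v ∈ Ep, A ξ₁ v = l1 • v := by
    intro v hv; rw [hEp, Module.End.mem_eigenspace_iff] at hv; exact hv
  have hmemQ : ∀ v ∈ Em, A ξ₁ v = (-l1) • v := by
    intro v hv; rw [hEm, Module.End.mem_eigenspace_iff] at hv; exact hv
  have hPfix : ∀ v ∈ Ep, P v = v := by
    intro v hv
    rw [hPdef, hmemP v hv,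
      show l1 • v + l1 • v = (2 * l1) • v by module,
      smul_smul, inv_mul_cancel₀ h2l1, one_smul]
  have hQfix : ∀ v ∈ Em, Q v = v := by
    intro v hv
    rw [hQdef, hmemQ v hv,
      show l1 • v - (-l1) • v = (2 * l1) • v by module,
      smul_smul, inv_mul_cancel₀ h2l1, one_smul]
  have hPzero : ∀ v ∈ Em, P v = 0 := by
    intro v hv
    rw [hPdef, hmemQ v hv, show l1 • v + (-l1) • v = (0 : E) by module, smul_zero]
  have hQzero : ∀ v ∈ Ep, Q v = 0 := by
    intro v hv
    rw [hQdef, hmemP v hv, show l1 • v - l1 • v = (0 : E) by module, smul_zero]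
  have hPsym : ∀ u v : E, ⟪P u, v⟫ = ⟪u, P v⟫ := by
    intro u v
    rw [hPdef, hPdef, real_inner_smul_left, real_inner_smul_right,
      inner_add_left, inner_add_right, real_inner_smul_left, real_inner_smul_right,
      hsymA]
  have hQsym : ∀ u v : E, ⟪Q u, v⟫ = ⟪u, Q v⟫ := by
    intro u v
    rw [hQdef, hQdef, real_inner_smul_left, real_inner_smul_right,
      inner_sub_left, inner_sub_right, real_inner_smul_left, real_inner_smul_right,
      hsymA]
  have horth : ∀ x ∈ Ep, ∀ y ∈ Em, ⟪x, y⟫ = 0 := by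
    intro x hx y hy
    have h1 : l1 * ⟪x, y⟫ = -(l1 * ⟪x, y⟫) := by
      calc l1 * ⟪x, y⟫ = ⟪A ξ₁ x, y⟫ := by rw [hmemP x hx, real_inner_smul_left]
        _ = ⟪x, A ξ₁ y⟫ := hsymA _ _ _
        _ = -(l1 * ⟪x, y⟫) := by rw [hmemQ y hy, real_inner_smul_right]; ring
    have h2 : l1 * ⟪x, y⟫ = 0 := by linarith
    exact (mul_eq_zero.mp h2).resolve_left (ne_of_gt hl1)
  -- block-diagonal parts
  have hkey1 : ∀ x ∈ Ep, P (A ξ₂ x) = ρ • x := by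
    intro x hx
    have h := hanti x
    rw [hmemP x hx, map_smul] at h
    have h' : A ξ₁ (A ξ₂ x) = c • x - l1 • A ξ₂ x := by rw [← h]; abel
    rw [hPdef, h', show l1 • A ξ₂ x + (c • x - l1 • A ξ₂ x) = c • x by module,
      smul_smul, hρ, div_eq_inv_mul]
  have hkey2 : ∀ y ∈ Em, Q (A ξ₂ y) = (-ρ) • y := by
    intro y hy
    have h := hanti y
    rw [hmemQ y hy, map_smul] at h
    have h' : A ξ₁ (A ξ₂ y) = c • y + l1 • A ξ₂ y := by
      rw [← h]; rw [neg_smul]; abel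
    rw [hQdef, h', show l1 • A ξ₂ y - (c • y + l1 • A ξ₂ y) = (-c) • y by module,
      smul_smul, hρ]
    congr 1
    field_simp
  have hdec1 : ∀ x ∈ Ep, A ξ₂ x = ρ • x + Q (A ξ₂ x) := by
    intro x hx
    rw [← hkey1 x hx]
    exact (hPQ _).symm
  have hdec2 : ∀ y ∈ Em, A ξ₂ y = (-ρ) • y + P (A ξ₂ y) := by
    intro y hy
    rw [← hkey2 y hy]
    have h := hPQ (A ξ₂ y)
    rw [add_comm] at h
    exact h.symm
  set s : ℝ := l2 ^ 2 - ρ ^ 2 with hs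
  have hkey3 : ∀ x ∈ Ep, P (A ξ₂ (Q (A ξ₂ x))) = s • x := by
    intro x hx
    have h3 := hdec1 x hx
    have h4 := congrArg (A ξ₂) h3
    rw [hsq2, map_add, map_smul] at h4
    have h5 : A ξ₂ (Q (A ξ₂ x)) = l2 ^ 2 • x - ρ • A ξ₂ x := by
      rw [h4]; abel
    have h6 := congrArg P h5
    rw [map_sub, map_smul, map_smul, hPfix x hx, hkey1 x hx] at h6
    rw [h6, hs]
    module
  have hkey4 : ∀ y ∈ Em, Q (A ξ₂ (P (A ξ₂ y))) = s • y := by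
    intro y hy
    have h3 := hdec2 y hy
    have h4 := congrArg (A ξ₂) h3
    rw [hsq2, map_add, map_smul] at h4
    have h5 : A ξ₂ (P (A ξ₂ y)) = l2 ^ 2 • y - (-ρ) • A ξ₂ y := by
      rw [h4]; abel
    have h6 := congrArg Q h5
    rw [map_sub, map_smul, map_smul, hQfix y hy, hkey2 y hy] at h6
    rw [h6, hs]
    module
  have hnorm1 : ∀ x ∈ Ep, s * ‖x‖ ^ 2 = ‖Q (A ξ₂ x)‖ ^ 2 := by
    intro x hx
    have hb := hQmem (A ξ₂ x)
    calc s * ‖x‖ ^ 2 = ⟪s • x, x⟫ := by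
          rw [real_inner_smul_left, real_inner_self_eq_norm_sq]
      _ = ⟪P (A ξ₂ (Q (A ξ₂ x))), x⟫ := by rw [hkey3 x hx]
      _ = ⟪A ξ₂ (Q (A ξ₂ x)), P x⟫ := hPsym _ _
      _ = ⟪A ξ₂ (Q (A ξ₂ x)), x⟫ := by rw [hPfix x hx]
      _ = ⟪Q (A ξ₂ x), A ξ₂ x⟫ := hsymA ξ₂ _ _
      _ = ⟪Q (A ξ₂ x), ρ • x + Q (A ξ₂ x)⟫ := by rw [← hdec1 x hx]
      _ = ρ * ⟪Q (A ξ₂ x), x⟫ + ‖Q (A ξ₂ x)‖ ^ 2 := by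
          rw [inner_add_right, real_inner_smul_right, real_inner_self_eq_norm_sq]
      _ = ‖Q (A ξ₂ x)‖ ^ 2 := by
          rw [real_inner_comm, horth x hx _ hb]; ring
  have hnorm2 : ∀ y ∈ Em, s * ‖y‖ ^ 2 = ‖P (A ξ₂ y)‖ ^ 2 := by
    intro y hy
    have hb := hPmem (A ξ₂ y)
    calc s * ‖y‖ ^ 2 = ⟪s • y, y⟫ := by
          rw [real_inner_smul_left, real_inner_self_eq_norm_sq]
      _ = ⟪Q (A ξ₂ (P (A ξ₂ y))), y⟫ := by rw [hkey4 y hy]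
      _ = ⟪A ξ₂ (P (A ξ₂ y)), Q y⟫ := hQsym _ _
      _ = ⟪A ξ₂ (P (A ξ₂ y)), y⟫ := by rw [hQfix y hy]
      _ = ⟪P (A ξ₂ y), A ξ₂ y⟫ := hsymA ξ₂ _ _
      _ = ⟪P (A ξ₂ y), (-ρ) • y + P (A ξ₂ y)⟫ := by rw [← hdec2 y hy]
      _ = (-ρ) * ⟪P (A ξ₂ y), y⟫ + ‖P (A ξ₂ y)‖ ^ 2 := by
          rw [inner_add_right, real_inner_smul_right, real_inner_self_eq_norm_sq]
      _ = ‖P (A ξ₂ y)‖ ^ 2 := by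
          rw [horth _ hb y hy]; ring
  -- positivity of s
  have hspos : 0 < s := by
    obtain ⟨v, hv⟩ := exists_ne (0 : E)
    have hge : 0 ≤ s := by
      rcases eq_or_ne (P v) 0 with hp | hp
      · have hq : Q v ≠ 0 := by
          intro h; apply hv; rw [← hPQ v, hp, h, add_zero]
        have h := hnorm2 (Q v) (hQmem v)
        have h1 : 0 < ‖Q v‖ ^ 2 := pow_pos (norm_pos_iff.mpr hq) 2
        nlinarith [sq_nonneg ‖P (A ξ₂ (Q v))‖]
      · have h := hnorm1 (P v) (hPmem v)
        have h1 : 0 < ‖P v‖ ^ 2 := pow_pos (norm_pos_iff.mpr hp) 2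
        nlinarith [sq_nonneg ‖Q (A ξ₂ (P v))‖]
    have hne : s ≠ 0 := by
      intro h0
      have hq0 : ∀ x ∈ Ep, Q (A ξ₂ x) = 0 := by
        intro x hx
        have h := hnorm1 x hx
        rw [h0, zero_mul] at h
        have h2 : ‖Q (A ξ₂ x)‖ ^ 2 = 0 := h.symm
        rw [pow_eq_zero_iff (two_ne_zero)] at h2
        exact norm_eq_zero.mp h2
      have hp0 : ∀ y ∈ Em, P (A ξ₂ y) = 0 := by
        intro y hy
        have h := hnorm2 y hy
        rw [h0, zero_mul] at h
        have h2 : ‖P (A ξ₂ y)‖ ^ 2 = 0 := h.symm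
        rw [pow_eq_zero_iff (two_ne_zero)] at h2
        exact norm_eq_zero.mp h2
      set ξ : W := (-ρ) • ξ₁ + l1 • ξ₂ with hξ
      have hξne : ξ ≠ 0 := by
        intro h
        have h0' : ⟪ξ₂, ξ⟫ = 0 := by rw [h, inner_zero_right]
        rw [hξ, inner_add_right, real_inner_smul_right, real_inner_smul_right,
          real_inner_comm ξ₁ ξ₂, hξ₁₂, real_inner_self_eq_norm_sq, hξ₂] at h0'
        norm_num at h0'
        exact (ne_of_gt hl1) h0'
      have hAξ : ∀ w : E, A ξ w = 0 := by
        intro w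
        rw [hξ, hlin]
        have e1 : A ξ₂ (P w) = ρ • P w := by
          rw [hdec1 _ (hPmem w), hq0 _ (hPmem w), add_zero]
        have e2 : A ξ₂ (Q w) = (-ρ) • Q w := by
          rw [hdec2 _ (hQmem w), hp0 _ (hQmem w), add_zero]
        rw [← hPQ w, map_add, map_add, hPeig, hQeig, e1, e2]
        module
      obtain ⟨v', hv'⟩ := exists_ne (0 : E)
      have h := hsq' ξ hξne v'
      rw [hAξ] at h
      rcases (smul_eq_zero.mp h.symm) with h3 | h3
      · exact pow_ne_zero 2 (ne_of_gt (hpos ξ hξne)) h3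
      · exact hv' h3
    exact lt_of_le_of_ne hge (Ne.symm hne)
  -- the block map
  set Bmap : ↥Ep →ₗ[ℝ] ↥Em :=
    LinearMap.codRestrict Em ((Q ∘ₗ A ξ₂) ∘ₗ Ep.subtype) (fun x => hQmem _) with hBmap
  set Cmap : ↥Em →ₗ[ℝ] ↥Ep :=
    LinearMap.codRestrict Ep ((P ∘ₗ A ξ₂) ∘ₗ Em.subtype) (fun y => hPmem _) with hCmap
  have hBcoe : ∀ x : ↥Ep, (Bmap x : E) = Q (A ξ₂ (x : E)) := fun x => rfl
  have hCcoe : ∀ y : ↥Em, (Cmap y : E) = P (A ξ₂ (y : E)) := fun y => rfl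
  have hadj : LinearMap.adjoint Bmap = Cmap := by
    symm
    rw [LinearMap.eq_adjoint_iff]
    intro x y
    rw [Submodule.coe_inner, Submodule.coe_inner, hCcoe, hBcoe]
    calc ⟪P (A ξ₂ (x : E)), (y : E)⟫ = ⟪A ξ₂ (x : E), P (y : E)⟫ := hPsym _ _
      _ = ⟪A ξ₂ (x : E), (y : E)⟫ := by rw [hPfix _ y.2]
      _ = ⟪(x : E), A ξ₂ (y : E)⟫ := hsymA ξ₂ _ _
      _ = ⟪Q (x : E), A ξ₂ (y : E)⟫ := by rw [hQfix _ x.2]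
      _ = ⟪(x : E), Q (A ξ₂ (y : E))⟫ := hQsym _ _
  have hsqs : Real.sqrt s ^ 2 = s := Real.sq_sqrt hspos.le
  refine ⟨ρ, Real.sqrt s, Real.sqrt_pos.mpr hspos, by rw [hsqs, hs]; ring, Bmap, ?_, ?_, ?_, ?_⟩
  · rw [hadj]
    refine LinearMap.ext fun x => Subtype.ext ?_
    have := hkey3 (x : E) x.2
    simp only [LinearMap.comp_apply, LinearMap.smul_apply, LinearMap.id_apply, hsqs]
    rw [hCcoe, hBcoe, this, Submodule.coe_smul]
  · rw [hadj]
    refine LinearMap.ext fun y => Subtype.ext ?_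
    have := hkey4 (y : E) y.2
    simp only [LinearMap.comp_apply, LinearMap.smul_apply, LinearMap.id_apply, hsqs]
    rw [hBcoe, hCcoe, this, Submodule.coe_smul]
  · intro x
    rw [hBcoe]
    exact hdec1 (x : E) x.2
  · intro y
    rw [hadj, hCcoe]
    exact hdec2 (y : E) y.2
end

section
/- Let E, W be real inner product spaces with dim W = 2, α: E × E → W symmetric bilinear, and suppose A_ξ² = λ(ξ)²·Id_E with λ(ξ) > 0 for every nonzero ξ ∈ W. Fix an orthonormal basis {ξ₁, ξ₂} of W, and let E± = ker(A_{ξ₁} ∓ λ(ξ₁)·Id). Then there exists ρ ∈ ℝ such that α(X,Y) = ⟨X,Y⟩(λ(ξ₁)ξ₁ + ρξ₂) for all X, Y ∈ E⁺, and α(X,Y) = −⟨X,Y⟩(λ(ξ₁)ξ₁ + ρξ₂) for all X, Y ∈ E⁻. -/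
open scoped RealInnerProductSpace

/-- In a 2-dimensional real inner product space, every vector is reconstructed from its
inner products with an orthonormal pair. -/
lemma repr_two_aux {W : Type*} [NormedAddCommGroup W] [InnerProductSpace ℝ W]
    [FiniteDimensional ℝ W] (hW : Module.finrank ℝ W = 2)
    (ξ₁ ξ₂ : W) (hξ₁ : ‖ξ₁‖ = 1) (hξ₂ : ‖ξ₂‖ = 1) (hξ₁₂ : ⟪ξ₁, ξ₂⟫ = 0) (w : W) :
    w = ⟪ξ₁, w⟫ • ξ₁ + ⟪ξ₂, w⟫ • ξ₂ := by
  have h11 : ⟪ξ₁, ξ₁⟫ = 1 := by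
    rw [real_inner_self_eq_norm_sq, hξ₁]; norm_num
  have h22 : ⟪ξ₂, ξ₂⟫ = 1 := by
    rw [real_inner_self_eq_norm_sq, hξ₂]; norm_num
  have h21 : ⟪ξ₂, ξ₁⟫ = 0 := by rw [real_inner_comm]; exact hξ₁₂
  have horth : Orthonormal ℝ ![ξ₁, ξ₂] := by
    rw [orthonormal_iff_ite]
    intro i j
    fin_cases i <;> fin_cases j <;> simp [h11, h22, h21, hξ₁₂, hξ₁, hξ₂]
  have hspan : Submodule.span ℝ (Set.range ![ξ₁, ξ₂]) = ⊤ := by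
    apply LinearIndependent.span_eq_top_of_card_eq_finrank horth.linearIndependent
    simp [hW]
  set z : W := w - (⟪ξ₁, w⟫ • ξ₁ + ⟪ξ₂, w⟫ • ξ₂) with hz
  have hz1 : ⟪ξ₁, z⟫ = 0 := by
    simp [hz, inner_sub_right, inner_add_right, inner_smul_right, h11, hξ₁₂, hξ₁]
  have hz2 : ⟪ξ₂, z⟫ = 0 := by
    simp [hz, inner_sub_right, inner_add_right, inner_smul_right, h22, h21, hξ₂]
  have hmem : z ∈ Submodule.span ℝ ({ξ₁, ξ₂} : Set W) := by
    have hr : Set.range ![ξ₁, ξ₂] = ({ξ₁, ξ₂} : Set W) := by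
      ext x; simp [Matrix.range_cons, Matrix.range_empty]; tauto
    rw [hr] at hspan
    rw [hspan]; trivial
  obtain ⟨a, b, hab⟩ := Submodule.mem_span_pair.mp hmem
  have hzz : ⟪z, z⟫ = 0 := by
    calc ⟪z, z⟫ = ⟪a • ξ₁ + b • ξ₂, z⟫ := by rw [hab]
    _ = 0 := by simp [inner_add_left, inner_smul_left, hz1, hz2]
  have hz0 : z = 0 := inner_self_eq_zero.mp hzz
  exact (sub_eq_zero.mp hz0)

/-- Lemma 3.5 (alum), restriction part: α restricted to E⁺ × E⁺ and E⁻ × E⁻ is umbilical. -/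
theorem alpha_restricted_umbilical
    (E W : Type*) [NormedAddCommGroup E] [InnerProductSpace ℝ E] [FiniteDimensional ℝ E]
    [NormedAddCommGroup W] [InnerProductSpace ℝ W] [FiniteDimensional ℝ W]
    (hW : Module.finrank ℝ W = 2)
    (α : E →ₗ[ℝ] E →ₗ[ℝ] W) (hsymm : ∀ X Y : E, α X Y = α Y X)
    (A : W → E →ₗ[ℝ] E)
    (hA : ∀ (ξ : W) (X Y : E), ⟪A ξ X, Y⟫ = ⟪α X Y, ξ⟫)
    (lam : W → ℝ) (hpos : ∀ ξ : W, ξ ≠ 0 → 0 < lam ξ)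
    (hsq : ∀ ξ : W, ξ ≠ 0 → A ξ ∘ₗ A ξ = (lam ξ) ^ 2 • LinearMap.id)
    (ξ₁ ξ₂ : W) (hξ₁ : ‖ξ₁‖ = 1) (hξ₂ : ‖ξ₂‖ = 1) (hξ₁₂ : ⟪ξ₁, ξ₂⟫ = 0) :
    ∃ ρ : ℝ,
      (∀ X Y : E, X ∈ LinearMap.ker (A ξ₁ - lam ξ₁ • LinearMap.id) →
        Y ∈ LinearMap.ker (A ξ₁ - lam ξ₁ • LinearMap.id) →
        α X Y = ⟪X, Y⟫ • (lam ξ₁ • ξ₁ + ρ • ξ₂)) ∧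
      (∀ X Y : E, X ∈ LinearMap.ker (A ξ₁ + lam ξ₁ • LinearMap.id) →
        Y ∈ LinearMap.ker (A ξ₁ + lam ξ₁ • LinearMap.id) →
        α X Y = -(⟪X, Y⟫ • (lam ξ₁ • ξ₁ + ρ • ξ₂))) := by
  have hne1 : ξ₁ ≠ 0 := by
    intro h; rw [h, norm_zero] at hξ₁; exact one_ne_zero hξ₁.symm
  have hne2 : ξ₂ ≠ 0 := by
    intro h; rw [h, norm_zero] at hξ₂; exact one_ne_zero hξ₂.symm
  have h21 : ⟪ξ₂, ξ₁⟫ = 0 := by rw [real_inner_comm]; exact hξ₁₂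
  have hne12 : ξ₁ + ξ₂ ≠ 0 := by
    intro h
    have hn : ‖ξ₁ + ξ₂‖ ^ 2 = 2 := by
      rw [← real_inner_self_eq_norm_sq]
      simp only [inner_add_add_self, h21, hξ₁₂,
        real_inner_self_eq_norm_sq, hξ₁, hξ₂]
      norm_num
    rw [h, norm_zero] at hn
    norm_num at hn
  set l := lam ξ₁ with hl
  have hlpos : 0 < l := hpos ξ₁ hne1
  set c : ℝ := ((lam (ξ₁ + ξ₂)) ^ 2 - (lam ξ₁) ^ 2 - (lam ξ₂) ^ 2) / 2 with hc
  have hsa : ∀ (ξ : W) (u v : E), ⟪A ξ u, v⟫ = ⟪u, A ξ v⟫ := by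
    intro ξ u v
    rw [hA, hsymm, ← hA]
    exact real_inner_comm _ _
  have hadd : ∀ X : E, A (ξ₁ + ξ₂) X = A ξ₁ X + A ξ₂ X := by
    intro X
    apply ext_inner_right ℝ
    intro v
    rw [hA, inner_add_left, hA, hA, inner_add_right]
  have hanti : ∀ X : E, A ξ₁ (A ξ₂ X) + A ξ₂ (A ξ₁ X) = (2 * c) • X := by
    intro X
    have h1 := LinearMap.congr_fun (hsq (ξ₁ + ξ₂) hne12) X
    have h2 := LinearMap.congr_fun (hsq ξ₁ hne1) X
    have h3 := LinearMap.congr_fun (hsq ξ₂ hne2) X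
    simp only [LinearMap.comp_apply, LinearMap.smul_apply, LinearMap.id_apply] at h1 h2 h3
    simp only [hadd, map_add] at h1
    have hexp : A ξ₁ (A ξ₂ X) + A ξ₂ (A ξ₁ X)
        = (A ξ₁ (A ξ₁ X) + A ξ₁ (A ξ₂ X) + (A ξ₂ (A ξ₁ X) + A ξ₂ (A ξ₂ X)))
          - A ξ₁ (A ξ₁ X) - A ξ₂ (A ξ₂ X) := by abel
    rw [hexp, h1, h2, h3, ← sub_smul, ← sub_smul]
    congr 1
    rw [hc]; ring
  refine ⟨c / l, ?_, ?_⟩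
  · intro X Y hX hY
    have hXe : A ξ₁ X = l • X := by
      have h := hX
      simp only [LinearMap.mem_ker, LinearMap.sub_apply, LinearMap.smul_apply,
        LinearMap.id_apply, sub_eq_zero] at h
      exact h
    have hYe : A ξ₁ Y = l • Y := by
      have h := hY
      simp only [LinearMap.mem_ker, LinearMap.sub_apply, LinearMap.smul_apply,
        LinearMap.id_apply, sub_eq_zero] at h
      exact h
    have hkey : ⟪A ξ₂ X, Y⟫ = (c / l) * ⟪X, Y⟫ := by
      have e1 : ⟪A ξ₁ (A ξ₂ X) + A ξ₂ (A ξ₁ X), Y⟫ = (2 * c) * ⟪X, Y⟫ := by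
        rw [hanti X, real_inner_smul_left]
      rw [inner_add_left, hsa ξ₁ (A ξ₂ X) Y, hYe, hXe, real_inner_smul_right, map_smul,
        real_inner_smul_left] at e1
      have hl0 : l ≠ 0 := ne_of_gt hlpos
      field_simp
      linarith [e1]
    have i1 : ⟪ξ₁, α X Y⟫ = l * ⟪X, Y⟫ := by
      rw [real_inner_comm, ← hA, hXe, real_inner_smul_left]
    have i2 : ⟪ξ₂, α X Y⟫ = (c / l) * ⟪X, Y⟫ := by
      rw [real_inner_comm, ← hA]; exact hkey
    rw [repr_two_aux hW ξ₁ ξ₂ hξ₁ hξ₂ hξ₁₂ (α X Y), i1, i2, smul_add, smul_smul, smul_smul,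
      mul_comm l, mul_comm (c / l)]
  · intro X Y hX hY
    have hXe : A ξ₁ X = -(l • X) := by
      have h := hX
      simp only [LinearMap.mem_ker, LinearMap.add_apply, LinearMap.smul_apply,
        LinearMap.id_apply, add_eq_zero_iff_eq_neg] at h
      exact h
    have hYe : A ξ₁ Y = -(l • Y) := by
      have h := hY
      simp only [LinearMap.mem_ker, LinearMap.add_apply, LinearMap.smul_apply,
        LinearMap.id_apply, add_eq_zero_iff_eq_neg] at h
      exact h
    have hkey : ⟪A ξ₂ X, Y⟫ = -((c / l) * ⟪X, Y⟫) := by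
      have e1 : ⟪A ξ₁ (A ξ₂ X) + A ξ₂ (A ξ₁ X), Y⟫ = (2 * c) * ⟪X, Y⟫ := by
        rw [hanti X, real_inner_smul_left]
      rw [inner_add_left, hsa ξ₁ (A ξ₂ X) Y, hYe, hXe, inner_neg_right,
        real_inner_smul_right, map_neg, map_smul, inner_neg_left,
        real_inner_smul_left] at e1
      have hl0 : l ≠ 0 := ne_of_gt hlpos
      field_simp
      linarith [e1]
    have i1 : ⟪ξ₁, α X Y⟫ = -(l * ⟪X, Y⟫) := by
      rw [real_inner_comm, ← hA, hXe, inner_neg_left, real_inner_smul_left]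
    have i2 : ⟪ξ₂, α X Y⟫ = -((c / l) * ⟪X, Y⟫) := by
      rw [real_inner_comm, ← hA]; exact hkey
    rw [repr_two_aux hW ξ₁ ξ₂ hξ₁ hξ₂ hξ₁₂ (α X Y), i1, i2, smul_add, neg_add, neg_smul,
      neg_smul, smul_smul, smul_smul, mul_comm l, mul_comm (c / l)]
end
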